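/- Let W be an N×N real matrix with nonnegative entries, positive diagonal entries, row sums equal to 1, and strongly connected digraph; let q be its left Perron–Frobenius eigenvector, Q = diag(q), 𝐐 = Q ⊗ I_n, and σ̄ = σ_{N−1}(Q^{1/2} W Q^{−1/2}). Then: (i) (qᵀ ⊗ I_n)(W ⊗ I_n) x = (qᵀ ⊗ I_n) x for all x ∈ ℝ^{Nn}, so the subspace E⊥^Q = {x ∈ ℝ^{Nn} : (qᵀ ⊗ I_n)x = 0} is invariant under W ⊗ I_n; and (ii) for every x_⊥ ∈ E⊥^Q, ‖(W ⊗ I_n) x_⊥‖_𝐐 ≤ σ̄ ‖x_⊥‖_𝐐. -/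

import Mathlib

open Matrix Kronecker

/-- `P`-weighted norm `‖x‖_P = √(xᵀ P x)`. -/
noncomputable def wnorm {ι : Type*} [Fintype ι] (P : Matrix ι ι ℝ) (x : ι → ℝ) : ℝ :=
  Real.sqrt (x ⬝ᵥ P.mulVec x)

/-- The singular values of a real square matrix, sorted in nondecreasing order
`σ₁(A) ≤ … ≤ σ_N(A)`; `sortedSingVals A i` is `σ_{i+1}(A)` (0-based index `i`). -/
noncomputable def sortedSingVals {N : ℕ} (A : Matrix (Fin N) (Fin N) ℝ) : Fin N → ℝ :=
  fun i =>
    Real.sqrt (((Matrix.isHermitian_conjTranspose_mul_self A).eigenvalues ∘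
      Tuple.sort (Matrix.isHermitian_conjTranspose_mul_self A).eigenvalues) i)

/-! The matrix `A = Q^{1/2} W Q^{-1/2}` satisfies `A (√q * v) = √q * (W v)`, so on each column of
`x` the `Q`-norm of `W x` is the Euclidean norm of `A (√q * x)`. Jensen's inequality on the
stochastic rows of `W`, together with `qᵀ W = qᵀ`, makes `A` a Euclidean contraction; and `√q` is
fixed by both `A` and `Aᵀ`, hence an eigenvector of `AᵀA` for its largest eigenvalue `1`. On the
orthogonal complement of such an eigenvector, which is the image of `E⊥^Q`, the Rayleigh quotient
of `AᵀA` is at most its second largest eigenvalue `σ̄²`. -/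

theorem Tuple.exists_forall_ne_le_sort_apply {α : Type*} [LinearOrder α] {N : ℕ} (hN : 1 < N)
    (f : Fin N → α) :
    ∃ k, ∀ j ≠ k, f j ≤ (f ∘ Tuple.sort f) ⟨N - 2, Nat.sub_lt_self two_pos hN⟩ := by
  refine ⟨Tuple.sort f ⟨N - 1, by omega⟩, fun j hj => ?_⟩
  have hle : (Tuple.sort f).symm j ≤ ⟨N - 2, Nat.sub_lt_self two_pos hN⟩ := by
    have hne : ((Tuple.sort f).symm j : ℕ) ≠ N - 1 := fun h =>
      hj ((Tuple.sort f).eq_symm_apply.mp (Fin.ext h.symm)).symm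
    change ((Tuple.sort f).symm j : ℕ) ≤ N - 2
    omega
  simpa using Tuple.monotone_sort f hle

/-- The second-eigenvalue bound in eigencoordinates: `L` are the eigenvalues, `lam` bounds all of
them but `L k`, and `d`, `c` are the coordinates of a top eigenvector and of a vector orthogonal
to it. -/
theorem sum_mul_sq_le_of_dotProduct_eq_zero {ι : Type*} [Fintype ι] {L c d : ι → ℝ} {k : ι}
    {lam μ : ℝ} (hsecond : ∀ j ≠ k, L j ≤ lam) (htop : ∀ j, L j ≤ μ)
    (hd : ∀ j, L j * d j = μ * d j) (hd0 : d ≠ 0) (hcd : c ⬝ᵥ d = 0) :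
    ∑ j, L j * c j ^ 2 ≤ lam * ∑ j, c j ^ 2 := by
  rw [Finset.mul_sum]
  rcases le_or_gt μ lam with hμ | hlam
  · exact Finset.sum_le_sum fun j _ => by gcongr; exact (htop j).trans hμ
  have hdk : ∀ j ≠ k, d j = 0 := fun j hj =>
    (mul_eq_mul_right_iff.mp (hd j)).resolve_left ((hsecond j hj).trans_lt hlam).ne
  have hck : c k = 0 := by
    have hdk0 : d k ≠ 0 := fun h => hd0 <| funext fun j => by
      by_cases hj : j = k
      · rw [hj, h]; rfl
      · exact hdk j hj
    rw [dotProduct, Finset.sum_eq_single k (fun j _ hj => by rw [hdk j hj, mul_zero])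
      (by simp)] at hcd
    exact (mul_eq_zero.mp hcd).resolve_right hdk0
  refine Finset.sum_le_sum fun j _ => ?_
  by_cases hj : j = k
  · simp [hj, hck]
  · gcongr; exact hsecond j hj

theorem Matrix.IsHermitian.exists_orthogonal_diagonalization {n : Type*} [Fintype n]
    [DecidableEq n] {S : Matrix n n ℝ} (hS : S.IsHermitian) :
    ∃ U : Matrix n n ℝ, Uᵀ * U = 1 ∧ U * Uᵀ = 1 ∧ S = U * diagonal hS.eigenvalues * Uᵀ := by
  refine ⟨hS.eigenvectorUnitary, ?_, ?_, ?_⟩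
  · simpa [star_eq_conjTranspose] using Unitary.coe_star_mul_self hS.eigenvectorUnitary
  · simpa [star_eq_conjTranspose] using Unitary.coe_mul_star_self hS.eigenvectorUnitary
  · conv_lhs => rw [hS.spectral_theorem]
    simp [star_eq_conjTranspose]

namespace Matrix

variable {n : Type*} [Fintype n] [DecidableEq n] {U : Matrix n n ℝ}

theorem transpose_mulVec_dotProduct_transpose_mulVec (hU : U * Uᵀ = 1) (u v : n → ℝ) :
    (Uᵀ *ᵥ u) ⬝ᵥ (Uᵀ *ᵥ v) = u ⬝ᵥ v := by
  rw [dotProduct_mulVec, vecMul_transpose, mulVec_mulVec, hU, one_mulVec]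

theorem dotProduct_mul_diagonal_mul_transpose_mulVec (L u : n → ℝ) :
    u ⬝ᵥ (U * diagonal L * Uᵀ) *ᵥ u = ∑ j, L j * (Uᵀ *ᵥ u) j ^ 2 := by
  rw [← mulVec_mulVec, ← mulVec_mulVec, dotProduct_mulVec, ← mulVec_transpose]
  simp [dotProduct, mulVec_diagonal, sq, mul_left_comm]

end Matrix

theorem Matrix.IsHermitian.dotProduct_mulVec_le_of_dotProduct_eq_zero {N : ℕ} (hN : 1 < N)
    {S : Matrix (Fin N) (Fin N) ℝ} (hS : S.IsHermitian) {μ : ℝ}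
    (hμ : ∀ u, u ⬝ᵥ S *ᵥ u ≤ μ * (u ⬝ᵥ u)) {w : Fin N → ℝ} (hw : w ≠ 0)
    (hSw : S *ᵥ w = μ • w) {u : Fin N → ℝ} (hu : u ⬝ᵥ w = 0) :
    u ⬝ᵥ S *ᵥ u ≤
      (hS.eigenvalues ∘ Tuple.sort hS.eigenvalues) ⟨N - 2, Nat.sub_lt_self two_pos hN⟩ *
        (u ⬝ᵥ u) := by
  obtain ⟨U, hUtU, hUUt, hSU⟩ := hS.exists_orthogonal_diagonalization
  obtain ⟨k, hsecond⟩ := Tuple.exists_forall_ne_le_sort_apply hN hS.eigenvalues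
  have htop : ∀ j, hS.eigenvalues j ≤ μ := fun j => by
    have hcoord : Uᵀ *ᵥ (U *ᵥ Pi.single j 1) = Pi.single j 1 := by
      rw [mulVec_mulVec, hUtU, one_mulVec]
    have h := hμ (U *ᵥ Pi.single j 1)
    conv at h => lhs; rw [hSU]
    rw [dotProduct_mul_diagonal_mul_transpose_mulVec, hcoord,
      ← transpose_mulVec_dotProduct_transpose_mulVec hUUt, hcoord] at h
    simpa [Pi.single_apply] using h
  have heigen : ∀ j, hS.eigenvalues j * (Uᵀ *ᵥ w) j = μ * (Uᵀ *ᵥ w) j := fun j => by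
    have h : Uᵀ *ᵥ (S *ᵥ w) = diagonal hS.eigenvalues *ᵥ (Uᵀ *ᵥ w) := by
      conv_lhs => rw [hSU]
      rw [mulVec_mulVec, mulVec_mulVec, ← Matrix.mul_assoc, ← Matrix.mul_assoc, hUtU,
        Matrix.one_mul]
    simpa [hSw, mulVec_smul, mulVec_diagonal] using (congrFun h j).symm
  have hcoord_ne : Uᵀ *ᵥ w ≠ 0 := fun h => hw <| by
    rw [← one_mulVec w, ← hUUt, ← mulVec_mulVec, h, mulVec_zero]
  have horth : (Uᵀ *ᵥ u) ⬝ᵥ (Uᵀ *ᵥ w) = 0 := by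
    rw [transpose_mulVec_dotProduct_transpose_mulVec hUUt, hu]
  conv_lhs => rw [hSU]
  rw [dotProduct_mul_diagonal_mul_transpose_mulVec,
    ← transpose_mulVec_dotProduct_transpose_mulVec hUUt u u]
  simpa only [dotProduct, ← sq] using
    sum_mul_sq_le_of_dotProduct_eq_zero hsecond htop heigen hcoord_ne horth

theorem mulVec_dotProduct_mulVec_le_sortedSingVals_sq {N : ℕ} (hN : 1 < N)
    {A : Matrix (Fin N) (Fin N) ℝ} (hcontr : ∀ u, A *ᵥ u ⬝ᵥ A *ᵥ u ≤ u ⬝ᵥ u)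
    {w : Fin N → ℝ} (hw : w ≠ 0) (hAw : A *ᵥ w = w) (hAtw : Aᵀ *ᵥ w = w)
    {u : Fin N → ℝ} (hu : u ⬝ᵥ w = 0) :
    A *ᵥ u ⬝ᵥ A *ᵥ u ≤ sortedSingVals A ⟨N - 2, Nat.sub_lt_self two_pos hN⟩ ^ 2 * (u ⬝ᵥ u) := by
  have hquad : ∀ u, u ⬝ᵥ (Aᴴ * A) *ᵥ u = A *ᵥ u ⬝ᵥ A *ᵥ u := fun u => by
    rw [← mulVec_mulVec, dotProduct_mulVec, conjTranspose_eq_transpose_of_trivial,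
      vecMul_transpose]
  have hSw : (Aᴴ * A) *ᵥ w = (1 : ℝ) • w := by
    rw [← mulVec_mulVec, hAw, conjTranspose_eq_transpose_of_trivial, hAtw, one_smul]
  have h := (isHermitian_conjTranspose_mul_self A).dotProduct_mulVec_le_of_dotProduct_eq_zero hN
    (fun u => by rw [hquad, one_mul]; exact hcontr u) hw hSw hu
  rw [hquad] at h
  rwa [sortedSingVals, Function.comp_apply,
    Real.sq_sqrt (eigenvalues_conjTranspose_mul_self_nonneg A _)]

namespace Matrix

theorem kronecker_one_mulVec_apply {l m n R : Type*} [Fintype m] [Fintype n] [DecidableEq n]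
    [CommSemiring R] (A : Matrix l m R) (x : m × n → R) (i : l) (j : n) :
    ((A ⊗ₖ (1 : Matrix n n R)) *ᵥ x) (i, j) = (A *ᵥ fun k => x (k, j)) i := by
  simp [mulVec, dotProduct, Fintype.sum_prod_type, kroneckerMap_apply, one_apply]

theorem dotProduct_diagonal_kronecker_one_mulVec {m n R : Type*} [Fintype m] [Fintype n]
    [DecidableEq m] [DecidableEq n] [CommSemiring R] (q : m → R) (x : m × n → R) :
    x ⬝ᵥ (diagonal q ⊗ₖ (1 : Matrix n n R)) *ᵥ x = ∑ j, q ⬝ᵥ (fun i => x (i, j)) ^ 2 := by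
  rw [dotProduct, Fintype.sum_prod_type, Finset.sum_comm]
  simp [dotProduct, kronecker_one_mulVec_apply, mulVec_diagonal, sq, mul_left_comm]

theorem sq_mulVec_le_mulVec_sq {m : Type*} [Fintype m] {W : Matrix m m ℝ}
    (hW : ∀ i j, 0 ≤ W i j) (hrow : ∀ i, ∑ j, W i j = 1) (v : m → ℝ) (i : m) :
    (W *ᵥ v) i ^ 2 ≤ (W *ᵥ v ^ 2) i := by
  simpa [mulVec, dotProduct] using (even_two.convexOn_pow (𝕜 := ℝ)).map_sum_le
    (fun j _ => hW i j) (hrow i) (fun j _ => Set.mem_univ (v j))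

theorem dotProduct_mulVec_sq_le {m : Type*} [Fintype m] {W : Matrix m m ℝ}
    (hW : ∀ i j, 0 ≤ W i j) (hrow : ∀ i, ∑ j, W i j = 1) {q : m → ℝ} (hq : 0 ≤ q)
    (hqW : q ᵥ* W = q) (v : m → ℝ) :
    q ⬝ᵥ (W *ᵥ v) ^ 2 ≤ q ⬝ᵥ v ^ 2 := by
  calc q ⬝ᵥ (W *ᵥ v) ^ 2 ≤ q ⬝ᵥ W *ᵥ v ^ 2 :=
        dotProduct_le_dotProduct_of_nonneg_left (sq_mulVec_le_mulVec_sq hW hrow v) hq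
    _ = q ⬝ᵥ v ^ 2 := by rw [dotProduct_mulVec, hqW]

variable {m : Type*} [Fintype m] [DecidableEq m]

theorem diagonal_mul_mul_diagonal_inv_mulVec {s : m → ℝ} (hs : ∀ i, s i ≠ 0)
    (W : Matrix m m ℝ) (v : m → ℝ) :
    (diagonal s * W * diagonal fun i => (s i)⁻¹) *ᵥ (s * v) = s * W *ᵥ v := by
  have hcancel : (diagonal fun i => (s i)⁻¹) *ᵥ (s * v) = v := by
    ext i; simp [mulVec_diagonal, hs i]
  rw [← mulVec_mulVec, hcancel, ← mulVec_mulVec]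
  ext i; simp [mulVec_diagonal]

theorem vecMul_diagonal_mul_mul_diagonal_inv {s : m → ℝ} (hs : ∀ i, s i ≠ 0)
    {W : Matrix m m ℝ} (hW : (s * s) ᵥ* W = s * s) :
    s ᵥ* (diagonal s * W * diagonal fun i => (s i)⁻¹) = s := by
  have hss : s ᵥ* diagonal s = s * s := by ext i; simp [vecMul_diagonal]
  rw [← vecMul_vecMul, ← vecMul_vecMul, hss, hW]
  ext i; simp [vecMul_diagonal, hs i]

end Matrix

theorem dotProduct_mulVec_sq_le_sortedSingVals_sq {N : ℕ} (hN : 1 < N)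
    {W : Matrix (Fin N) (Fin N) ℝ} (hW : ∀ i j, 0 ≤ W i j) (hrow : ∀ i, ∑ j, W i j = 1)
    {s q : Fin N → ℝ} (hs : ∀ i, s i ≠ 0) (hss : s * s = q) (hqW : q ᵥ* W = q)
    {v : Fin N → ℝ} (hv : q ⬝ᵥ v = 0) :
    q ⬝ᵥ (W *ᵥ v) ^ 2 ≤
      sortedSingVals (diagonal s * W * diagonal fun i => (s i)⁻¹)
        ⟨N - 2, Nat.sub_lt_self two_pos hN⟩ ^ 2 * q ⬝ᵥ v ^ 2 := by
  set A : Matrix (Fin N) (Fin N) ℝ := diagonal s * W * diagonal fun i => (s i)⁻¹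
  have hnorm : ∀ x, (s * x) ⬝ᵥ (s * x) = q ⬝ᵥ x ^ 2 := fun x => by
    simp only [dotProduct, ← hss, Pi.mul_apply, Pi.pow_apply]
    exact Finset.sum_congr rfl fun i _ => by ring
  have hAs := diagonal_mul_mul_diagonal_inv_mulVec hs W
  have hcontr : ∀ u, A *ᵥ u ⬝ᵥ A *ᵥ u ≤ u ⬝ᵥ u := fun u => by
    obtain ⟨x, rfl⟩ : ∃ x, u = s * x := ⟨fun i => (s i)⁻¹ * u i, by ext i; simp [hs i]⟩
    rw [hAs, hnorm, hnorm]
    exact dotProduct_mulVec_sq_le hW hrow (hss ▸ fun i => mul_self_nonneg (s i)) hqW x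
  have hAw : A *ᵥ s = s := by
    have hW1 : W *ᵥ 1 = 1 := funext fun i => by simp [mulVec, dotProduct, hrow]
    simpa [hW1] using hAs 1
  have hAtw : Aᵀ *ᵥ s = s := by
    rw [mulVec_transpose]
    exact vecMul_diagonal_mul_mul_diagonal_inv hs (hss ▸ hqW)
  have hperp : (s * v) ⬝ᵥ s = 0 := by
    rw [← hv]
    simp only [dotProduct, ← hss, Pi.mul_apply]
    exact Finset.sum_congr rfl fun i _ => by ring
  have hs0 : s ≠ 0 := fun h => hs ⟨0, by omega⟩ (congrFun h _)
  have key := mulVec_dotProduct_mulVec_le_sortedSingVals_sq hN hcontr hs0 hAw hAtw hperp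
  rwa [hAs, hnorm, hnorm] at key

theorem wnorm_le_mul_of_dotProduct_mulVec_le {ι : Type*} [Fintype ι] {P : Matrix ι ι ℝ}
    {x y : ι → ℝ} {c : ℝ} (hc : 0 ≤ c) (h : y ⬝ᵥ P *ᵥ y ≤ c ^ 2 * (x ⬝ᵥ P *ᵥ x)) :
    wnorm P y ≤ c * wnorm P x := by
  rw [wnorm, wnorm, ← Real.sqrt_sq hc, ← Real.sqrt_mul (sq_nonneg c)]
  exact Real.sqrt_le_sqrt h

/-- (i) `(qᵀ ⊗ I_n)(W ⊗ I_n)x = (qᵀ ⊗ I_n)x`, so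
`E⊥^Q = {x : (qᵀ ⊗ I_n)x = 0}` is invariant under `W ⊗ I_n`; (ii) on `E⊥^Q` the map
`W ⊗ I_n` is `σ̄`-contractive in the `𝐐`-norm, `σ̄ = σ_{N-1}(Q^{1/2} W Q^{-1/2})`. -/
theorem stmt9
    (N n : ℕ) (hN : 1 < N)
    (W : Matrix (Fin N) (Fin N) ℝ)
    (hWnonneg : ∀ i j, 0 ≤ W i j)
    (hWrow : ∀ i, ∑ j, W i j = 1)
    (q : Fin N → ℝ) (hqpos : ∀ i, 0 < q i)
    (hqW : Matrix.vecMul q W = q)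
    (Q : Matrix (Fin N) (Fin N) ℝ) (hQ : Q = Matrix.diagonal q)
    (bQ : Matrix (Fin N × Fin n) (Fin N × Fin n) ℝ)
    (hbQ : bQ = Q ⊗ₖ (1 : Matrix (Fin n) (Fin n) ℝ))
    (σbar : ℝ)
    (hσbar : σbar = sortedSingVals
      (Matrix.diagonal (fun i => Real.sqrt (q i)) * W *
        Matrix.diagonal (fun i => (Real.sqrt (q i))⁻¹)) ⟨N - 2, by omega⟩) :
    (∀ x : Fin N × Fin n → ℝ, ∀ j : Fin n,
        (∑ i, q i * ((W ⊗ₖ (1 : Matrix (Fin n) (Fin n) ℝ)).mulVec x) (i, j)) =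
          ∑ i, q i * x (i, j)) ∧
      (∀ xperp : Fin N × Fin n → ℝ,
        (∀ j : Fin n, (∑ i, q i * xperp (i, j)) = 0) →
          wnorm bQ ((W ⊗ₖ (1 : Matrix (Fin n) (Fin n) ℝ)).mulVec xperp) ≤
            σbar * wnorm bQ xperp) := by
  subst hQ hbQ hσbar
  refine ⟨fun x j => ?_, fun x hx => ?_⟩
  · simp only [kronecker_one_mulVec_apply]
    exact (dotProduct_mulVec q W _).trans (by rw [hqW]; rfl)
  · refine wnorm_le_mul_of_dotProduct_mulVec_le (Real.sqrt_nonneg _) ?_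
    rw [dotProduct_diagonal_kronecker_one_mulVec, dotProduct_diagonal_kronecker_one_mulVec,
      Finset.mul_sum]
    refine Finset.sum_le_sum fun j _ => ?_
    have hsqrt : (fun i => √(q i)) * (fun i => √(q i)) = q :=
      funext fun i => Real.mul_self_sqrt (hqpos i).le
    simp only [kronecker_one_mulVec_apply]
    exact dotProduct_mulVec_sq_le_sortedSingVals_sq hN
      hWnonneg hWrow (fun i => (Real.sqrt_pos.mpr (hqpos i)).ne') hsqrt hqW (hx j)
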